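/- (Theorem 2 for arbitrary nominal center) Let ζ ∈ ℝ³ be a unit vector and for an agent i with neighbor set 𝒩ᵢ let w_{ij} = a_{ij} I₃ + b_{ij} ζζᵀ + c_{ij} ζ^× be weights satisfying Σ_{j ∈ 𝒩ᵢ} w_{ij}(r_j − r_i) = 0 for given points r_i, r_j ∈ ℝ³. Then for every c ∈ ℝ³, T ∈ ℝ³, k ∈ ℝ, and θ ∈ ℝ, setting q_ℓ = (c + T) + k R_ζ (r_ℓ − c) with R_ζ = I₃ + (sin θ) ζ^× + (1 − cos θ)(ζ^×)², one has Σ_{j ∈ 𝒩ᵢ} w_{ij}(q_j − q_i) = 0; i.e., each agent's weight constraint is preserved under simultaneous translation, uniform scaling, and rotation about ζ applied about any common center c. -/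

import Mathlib

open Matrix

/-- The skew-symmetric cross-product matrix of a vector in R^3. -/
def skewMat (ζ : Fin 3 → ℝ) : Matrix (Fin 3) (Fin 3) ℝ :=
  !![0, -ζ 2, ζ 1;
     ζ 2, 0, -ζ 0;
     -ζ 1, ζ 0, 0]

/-- The outer-product matrix of a vector in R^3. -/
def outerMat (ζ : Fin 3 → ℝ) : Matrix (Fin 3) (Fin 3) ℝ :=
  Matrix.vecMulVec ζ ζ

/-- The Rodrigues rotation matrix by angle θ about the axis ζ. -/
noncomputable def rodrigues (ζ : Fin 3 → ℝ) (θ : ℝ) : Matrix (Fin 3) (Fin 3) ℝ :=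
  1 + Real.sin θ • skewMat ζ + (1 - Real.cos θ) • (skewMat ζ) ^ 2

/-! `ζ^×` annihilates `ζ` from both sides (`ζ × ζ = 0`), so it commutes with `ζζᵀ`; hence every
weight is a combination of matrices commuting with `ζ^×`, and so commutes with the Rodrigues
rotation, which is a polynomial in `ζ^×`. The transformation sends `r_j - r_i` to
`k R_ζ (r_j - r_i)`, so the new constraint sum is `k R_ζ` times the old one. -/

lemma skewMat_mulVec (ζ v : Fin 3 → ℝ) : skewMat ζ *ᵥ v = ζ ⨯₃ v := by
  ext i
  fin_cases i <;> simp [skewMat, cross_apply, mulVec, dotProduct, Fin.sum_univ_succ] <;> ring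

lemma vecMul_skewMat (ζ v : Fin 3 → ℝ) : v ᵥ* skewMat ζ = v ⨯₃ ζ := by
  ext i
  fin_cases i <;> simp [skewMat, cross_apply, vecMul, dotProduct, Fin.sum_univ_succ] <;> ring

lemma commute_outerMat_skewMat (ζ : Fin 3 → ℝ) : Commute (outerMat ζ) (skewMat ζ) := by
  rw [Commute, SemiconjBy, outerMat, vecMulVec_mul, mul_vecMulVec, skewMat_mulVec,
    vecMul_skewMat, cross_self, vecMulVec_zero, zero_vecMulVec]

lemma commute_weight_skewMat (ζ : Fin 3 → ℝ) (a b c : ℝ) :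
    Commute (a • (1 : Matrix (Fin 3) (Fin 3) ℝ) + b • outerMat ζ + c • skewMat ζ) (skewMat ζ) :=
  (((Commute.one_left _).smul_left a).add_left
    ((commute_outerMat_skewMat ζ).smul_left b)).add_left ((Commute.refl _).smul_left c)

lemma Commute.rodrigues_right {A : Matrix (Fin 3) (Fin 3) ℝ} {ζ : Fin 3 → ℝ}
    (h : Commute A (skewMat ζ)) (θ : ℝ) : Commute A (rodrigues ζ θ) :=
  ((Commute.one_right A).add_right (h.smul_right _)).add_right ((h.pow_right 2).smul_right _)

section

variable {ι n R : Type*} [Fintype n] [CommRing R]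

lemma affine_sub_affine (M : Matrix n n R) (p c x y : n → R) (k : R) :
    (p + k • (M *ᵥ (x - c))) - (p + k • (M *ᵥ (y - c))) = k • (M *ᵥ (x - y)) := by
  rw [add_sub_add_left_eq_sub, ← smul_sub, ← mulVec_sub, sub_sub_sub_cancel_right]

lemma sum_mulVec_smul_mulVec_of_commute (w : ι → Matrix n n R) (M : Matrix n n R)
    (hM : ∀ j, Commute (w j) M) (s : Finset ι) (v : ι → n → R) (k : R) :
    ∑ j ∈ s, w j *ᵥ (k • (M *ᵥ v j)) = k • (M *ᵥ ∑ j ∈ s, w j *ᵥ v j) := by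
  simp only [mulVec_sum, Finset.smul_sum, mulVec_smul, mulVec_mulVec, (hM _).eq]

end

theorem constraint_preserved_any_center_general
    {ι : Type*} (ζ : Fin 3 → ℝ)
    (i : ι) (N : Finset ι)
    (a b c' : ι → ℝ)
    (w : ι → Matrix (Fin 3) (Fin 3) ℝ)
    (hw : ∀ j, w j =
      a j • (1 : Matrix (Fin 3) (Fin 3) ℝ) + b j • outerMat ζ + c' j • skewMat ζ)
    (r : ι → Fin 3 → ℝ)
    (hconstraint : ∑ j ∈ N, (w j) *ᵥ (r j - r i) = 0)
    (c T : Fin 3 → ℝ) (k θ : ℝ)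
    (q : ι → Fin 3 → ℝ)
    (hq : ∀ ℓ, q ℓ = (c + T) + k • (rodrigues ζ θ *ᵥ (r ℓ - c))) :
    ∑ j ∈ N, (w j) *ᵥ (q j - q i) = 0 := by
  have hcomm : ∀ j, Commute (w j) (rodrigues ζ θ) := fun j =>
    hw j ▸ (commute_weight_skewMat ζ (a j) (b j) (c' j)).rodrigues_right θ
  simp only [hq, affine_sub_affine]
  rw [sum_mulVec_smul_mulVec_of_commute w _ hcomm, hconstraint, mulVec_zero, smul_zero]

/-- Theorem 2 (arbitrary nominal center): an agent's augmented-Laplacian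
weight constraint is preserved under simultaneous translation, uniform
scaling, and rotation about the unit axis ζ applied about any common
center c. -/
theorem constraint_preserved_any_center
    {ι : Type*} (ζ : Fin 3 → ℝ) (hζ : ζ ⬝ᵥ ζ = 1)
    (i : ι) (N : Finset ι)
    (a b c' : ι → ℝ)
    (w : ι → Matrix (Fin 3) (Fin 3) ℝ)
    (hw : ∀ j, w j =
      a j • (1 : Matrix (Fin 3) (Fin 3) ℝ) + b j • outerMat ζ + c' j • skewMat ζ)
    (r : ι → Fin 3 → ℝ)
    (hconstraint : ∑ j ∈ N, (w j) *ᵥ (r j - r i) = 0)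
    (c T : Fin 3 → ℝ) (k θ : ℝ)
    (q : ι → Fin 3 → ℝ)
    (hq : ∀ ℓ, q ℓ = (c + T) + k • (rodrigues ζ θ *ᵥ (r ℓ - c))) :
    ∑ j ∈ N, (w j) *ᵥ (q j - q i) = 0 :=
  constraint_preserved_any_center_general ζ i N a b c' w hw r hconstraint c T k θ q hq
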